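/- Let B₀ = (b_{ij}) ∈ ℝ^{n×n} be symmetric positive definite and 1 ≤ s₀ ≤ n. Define ρ_min(s₀, |B₀|) = min{|q|ᵀ |B₀| |q| : q ∈ S^{n−1} with at most s₀ nonzero entries}, where |q| = (|q₁|,…,|q_n|). Then the quantity ρ̃(s₀, |B₀|) = sup{Σ_{i,j} |b_{ij}||q_i||h_j| : q, h ∈ S^{n−1} each with at most s₀ nonzero entries} satisfies ρ̃(s₀, |B₀|) ≤ min( 2 ρ_max(min(2s₀, n), (|b_{ij}|)) − ρ_min(s₀, |B₀|), √s₀ ‖B₀‖₂ ). -/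

import Mathlib

/-!
Write `Q(q, h) = ∑ |b_ij| |q_i| |h_j|`. For unit `s₀`-sparse `q`, `h`, the vector
`u = |q| + |h|` is `2s₀`-sparse with `‖u‖ ≤ 2`; by symmetry of `B₀`,
`Q(q, q) + Q(h, h) + 2 Q(q, h) = Q(u, u) ≤ ‖u‖² ρ_max ≤ 4 ρ_max`, and both diagonal terms are at
least `ρ_min`. For the spectral bound, the row sum `∑_j |b_ij| |h_j|` is the `i`-th entry of `B₀ h'`
for a sign-flipped copy `h'` of `h`, so it is at most `‖B₀‖₂`, while `∑_i |q_i| ≤ √s₀` by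
Cauchy–Schwarz on the support of `q`.
-/

open MeasureTheory Matrix Finset

/-- Euclidean (ℓ₂) norm of a vector. -/
noncomputable def e2 {ι : Type*} [Fintype ι] (v : ι → ℝ) : ℝ :=
  Real.sqrt (∑ i, v i ^ 2)

/-- Operator (spectral) norm of a matrix. -/
noncomputable def opNorm {α β : Type*} [Fintype α] [Fintype β]
    (M : Matrix α β ℝ) : ℝ :=
  sSup {r | ∃ q : β → ℝ, e2 q ≤ 1 ∧ r = e2 (M.mulVec q)}

/-- A vector with at most `s₀` nonzero entries. -/
def IsSparse {ι : Type*} [Fintype ι] (s₀ : ℕ) (v : ι → ℝ) : Prop :=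
  ∃ S : Finset ι, S.card ≤ s₀ ∧ ∀ i ∉ S, v i = 0

/-- `ρ_max(s₀, (|b_ij|))`: maximum of `∑ |b_ij||q_i||q_j|` over `s₀`-sparse unit vectors. -/
noncomputable def rhoMax {n : ℕ} (s₀ : ℕ) (B : Matrix (Fin n) (Fin n) ℝ) : ℝ :=
  sSup {r | ∃ q : Fin n → ℝ, e2 q = 1 ∧ IsSparse s₀ q ∧
    r = ∑ i, ∑ j, |B i j| * |q i| * |q j|}

/-- `ρ_min(s₀, |B₀|)`: minimum of `|q|ᵀ|B₀||q|` over `s₀`-sparse unit vectors. -/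
noncomputable def rhoMin {n : ℕ} (s₀ : ℕ) (B : Matrix (Fin n) (Fin n) ℝ) : ℝ :=
  sInf {r | ∃ q : Fin n → ℝ, e2 q = 1 ∧ IsSparse s₀ q ∧
    r = ∑ i, ∑ j, |B i j| * |q i| * |q j|}

/-- `ρ̃(s₀, |B₀|)`: supremum of `∑ |b_ij||q_i||h_j|` over pairs of `s₀`-sparse unit vectors. -/
noncomputable def rhoTilde {n : ℕ} (s₀ : ℕ) (B : Matrix (Fin n) (Fin n) ℝ) : ℝ :=
  sSup {r | ∃ q h : Fin n → ℝ, e2 q = 1 ∧ IsSparse s₀ q ∧ e2 h = 1 ∧ IsSparse s₀ h ∧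
    r = ∑ i, ∑ j, |B i j| * |q i| * |h j|}

section Euclidean

variable {ι : Type*} [Fintype ι]

lemma e2_eq_norm (v : ι → ℝ) : e2 v = ‖(WithLp.toLp 2 v : EuclideanSpace ℝ ι)‖ := by
  simp [e2, EuclideanSpace.norm_eq]

lemma e2_nonneg (v : ι → ℝ) : 0 ≤ e2 v := Real.sqrt_nonneg _

lemma abs_le_e2 (v : ι → ℝ) (i : ι) : |v i| ≤ e2 v := by
  rw [e2_eq_norm]
  exact PiLp.norm_apply_le (WithLp.toLp 2 v) i

lemma e2_eq_zero_iff {v : ι → ℝ} : e2 v = 0 ↔ v = 0 := by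
  rw [e2_eq_norm, norm_eq_zero]
  exact WithLp.toLp_eq_zero 2

lemma e2_smul (c : ℝ) (v : ι → ℝ) : e2 (c • v) = |c| * e2 v := by
  rw [e2_eq_norm, e2_eq_norm, WithLp.toLp_smul, norm_smul, Real.norm_eq_abs]

lemma e2_add_le (u v : ι → ℝ) : e2 (u + v) ≤ e2 u + e2 v := by
  simpa only [e2_eq_norm, WithLp.toLp_add] using norm_add_le _ _

lemma e2_abs (v : ι → ℝ) : e2 (fun i => |v i|) = e2 v := by
  simp only [e2, sq_abs]

end Euclidean


namespace IsSparse

variable {ι : Type*} [Fintype ι] {s t : ℕ} {q h v : ι → ℝ}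

lemma mono (hst : s ≤ t) (hv : IsSparse s v) : IsSparse t v :=
  let ⟨S, hS, hv⟩ := hv
  ⟨S, hS.trans hst, hv⟩

lemma min_card (hv : IsSparse s v) : IsSparse (min s (Fintype.card ι)) v :=
  let ⟨S, hS, hv⟩ := hv
  ⟨S, le_min hS (card_le_univ S), hv⟩

lemma smul (c : ℝ) (hv : IsSparse s v) : IsSparse s (c • v) :=
  let ⟨S, hS, hv⟩ := hv
  ⟨S, hS, fun i hi => by simp [hv i hi]⟩

lemma abs_add_abs (hq : IsSparse s q) (hh : IsSparse t h) :
    IsSparse (s + t) (fun i => |q i| + |h i|) := by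
  classical
  obtain ⟨S, hS, hq⟩ := hq
  obtain ⟨T, hT, hh⟩ := hh
  refine ⟨S ∪ T, (card_union_le S T).trans (add_le_add hS hT), fun i hi => ?_⟩
  rw [mem_union, not_or] at hi
  simp [hq i hi.1, hh i hi.2]

lemma sum_abs_le_sqrt_mul_e2 (hv : IsSparse s v) : ∑ i, |v i| ≤ √s * e2 v := by
  obtain ⟨S, hS, hv⟩ := hv
  calc ∑ i, |v i| = ∑ i ∈ S, √1 * √(v i ^ 2) := by
        rw [← sum_subset (subset_univ S) fun i _ hi => by simp [hv i hi]]
        simp [Real.sqrt_sq_eq_abs]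
    _ ≤ √(∑ _i ∈ S, 1) * √(∑ i ∈ S, v i ^ 2) :=
        Real.sum_sqrt_mul_sqrt_le S (fun _ => zero_le_one) fun i => sq_nonneg (v i)
    _ ≤ √s * e2 v := by
        gcongr
        · simpa using hS
        · exact Real.sqrt_le_sqrt <| sum_le_sum_of_subset_of_nonneg (subset_univ S) fun i _ _ => sq_nonneg (v i)

end IsSparse

lemma isSparse_single {ι : Type*} [Fintype ι] [DecidableEq ι] (i : ι) (c : ℝ) :
    IsSparse 1 (Pi.single i c) :=
  ⟨{i}, (card_singleton i).le, fun j hj => Pi.single_eq_of_ne (by simpa using hj) _⟩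

lemma e2_single {ι : Type*} [Fintype ι] [DecidableEq ι] (i : ι) : e2 (Pi.single i (1 : ℝ)) = 1 := by
  rw [e2_eq_norm]
  simp

section AbsForm

variable {α β : Type*} [Fintype α] [Fintype β]

def absForm (B : Matrix α β ℝ) (q : α → ℝ) (h : β → ℝ) : ℝ :=
  ∑ i, ∑ j, |B i j| * |q i| * |h j|

variable (B : Matrix α β ℝ)

lemma absForm_nonneg (q : α → ℝ) (h : β → ℝ) : 0 ≤ absForm B q h :=
  sum_nonneg fun _ _ => sum_nonneg fun _ _ => by positivity

lemma absForm_le_sum_abs {q : α → ℝ} {h : β → ℝ} (hq : e2 q ≤ 1) (hh : e2 h ≤ 1) :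
    absForm B q h ≤ ∑ i, ∑ j, |B i j| :=
  sum_le_sum fun i _ => sum_le_sum fun j _ => by
    have hqi := (abs_le_e2 q i).trans hq
    have hhj := (abs_le_e2 h j).trans hh
    calc |B i j| * |q i| * |h j| ≤ |B i j| * 1 * 1 := by gcongr
      _ = |B i j| := by ring

lemma absForm_smul (a b : ℝ) (q : α → ℝ) (h : β → ℝ) :
    absForm B (a • q) (b • h) = |a| * |b| * absForm B q h := by
  simp only [absForm, Pi.smul_apply, smul_eq_mul, abs_mul, mul_sum]
  exact sum_congr rfl fun _ _ => sum_congr rfl fun _ _ => by ring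

lemma absForm_abs_add_abs_left (q q' : α → ℝ) (h : β → ℝ) :
    absForm B (fun i => |q i| + |q' i|) h = absForm B q h + absForm B q' h := by
  simp only [absForm, ← sum_add_distrib]
  refine sum_congr rfl fun i _ => sum_congr rfl fun j _ => ?_
  rw [abs_of_nonneg (by positivity : 0 ≤ |q i| + |q' i|)]
  ring

lemma absForm_abs_add_abs_right (q : α → ℝ) (h h' : β → ℝ) :
    absForm B q (fun j => |h j| + |h' j|) = absForm B q h + absForm B q h' := by
  simp only [absForm, ← sum_add_distrib]
  refine sum_congr rfl fun i _ => sum_congr rfl fun j _ => ?_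
  rw [abs_of_nonneg (by positivity : 0 ≤ |h j| + |h' j|)]
  ring

lemma absForm_eq_sum_abs_mul (q : α → ℝ) (h : β → ℝ) :
    absForm B q h = ∑ i, |q i| * ∑ j, |B i j| * |h j| := by
  simp only [absForm, mul_sum]
  exact sum_congr rfl fun _ _ => sum_congr rfl fun _ _ => by ring

end AbsForm

lemma absForm_comm {ι : Type*} [Fintype ι] {B : Matrix ι ι ℝ} (hB : B.IsSymm) (q h : ι → ℝ) :
    absForm B h q = absForm B q h := by
  rw [absForm, sum_comm]
  exact sum_congr rfl fun i _ => sum_congr rfl fun j _ => by rw [hB.apply]; ring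

section OpNorm

variable {α β : Type*} [Fintype α] [Fintype β] (M : Matrix α β ℝ)

lemma opNorm_bddAbove : BddAbove {r | ∃ q : β → ℝ, e2 q ≤ 1 ∧ r = e2 (M *ᵥ q)} := by
  classical
  let f := LinearMap.toContinuousLinearMap (Matrix.toLpLin 2 2 M)
  refine ⟨‖f‖, ?_⟩
  rintro _ ⟨q, hq, rfl⟩
  have hf : f (WithLp.toLp 2 q) = WithLp.toLp 2 (M *ᵥ q) := Matrix.toLpLin_toLp 2 2 M q
  rw [e2_eq_norm, ← hf]
  rw [e2_eq_norm] at hq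
  exact (f.le_opNorm _).trans (mul_le_of_le_one_right (norm_nonneg f) hq)

lemma le_opNorm {q : β → ℝ} (hq : e2 q ≤ 1) : e2 (M *ᵥ q) ≤ opNorm M :=
  le_csSup (opNorm_bddAbove M) ⟨q, hq, rfl⟩

lemma opNorm_nonneg : 0 ≤ opNorm M :=
  (e2_nonneg _).trans (le_opNorm M (q := 0) (by simp [e2]))

lemma sum_abs_mul_abs_le_opNorm {h : β → ℝ} (hh : e2 h ≤ 1) (i : α) :
    ∑ j, |M i j| * |h j| ≤ opNorm M := by
  set h' : β → ℝ := fun j => if 0 ≤ M i j then |h j| else -|h j|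
  have hrow : (M *ᵥ h') i = ∑ j, |M i j| * |h j| := by
    refine sum_congr rfl fun j _ => ?_
    by_cases hM : 0 ≤ M i j
    · simp [h', hM, abs_of_nonneg hM]
    · simp [h', hM, abs_of_neg (not_le.mp hM)]
  have hh' : e2 h' = e2 h := by
    rw [← e2_abs h', ← e2_abs h]
    congr 1
    ext j
    by_cases hM : 0 ≤ M i j <;> simp [h', hM]
  calc ∑ j, |M i j| * |h j| = (M *ᵥ h') i := hrow.symm
    _ ≤ |(M *ᵥ h') i| := le_abs_self _
    _ ≤ e2 (M *ᵥ h') := abs_le_e2 _ i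
    _ ≤ opNorm M := le_opNorm M (hh'.trans_le hh)

end OpNorm

section Rho

variable {n s : ℕ} (B : Matrix (Fin n) (Fin n) ℝ)

lemma le_rhoMax {q : Fin n → ℝ} (hq : e2 q = 1) (hqs : IsSparse s q) :
    absForm B q q ≤ rhoMax s B :=
  le_csSup ⟨∑ i, ∑ j, |B i j|, by rintro _ ⟨q, hq, -, rfl⟩; exact absForm_le_sum_abs B hq.le hq.le⟩
    ⟨q, hq, hqs, rfl⟩

lemma rhoMin_le {q : Fin n → ℝ} (hq : e2 q = 1) (hqs : IsSparse s q) :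
    rhoMin s B ≤ absForm B q q :=
  csInf_le ⟨0, by rintro _ ⟨q, -, -, rfl⟩; exact absForm_nonneg B q q⟩ ⟨q, hq, hqs, rfl⟩

lemma absForm_self_le_e2_sq_mul_rhoMax {u : Fin n → ℝ} (hu : IsSparse s u) :
    absForm B u u ≤ e2 u ^ 2 * rhoMax s B := by
  rcases eq_or_ne (e2 u) 0 with h0 | h0
  · rw [h0, e2_eq_zero_iff.mp h0]
    simp [absForm]
  have hunit : e2 ((e2 u)⁻¹ • u) = 1 := by
    rw [e2_smul, abs_inv, abs_of_nonneg (e2_nonneg u), inv_mul_cancel₀ h0]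
  have hle := le_rhoMax B hunit (hu.smul _)
  rw [absForm_smul, abs_inv, abs_of_nonneg (e2_nonneg u)] at hle
  calc absForm B u u = e2 u ^ 2 * ((e2 u)⁻¹ * (e2 u)⁻¹ * absForm B u u) := by
        field_simp
    _ ≤ e2 u ^ 2 * rhoMax s B := by gcongr

end Rho

lemma absForm_le_sqrt_mul_opNorm {α β : Type*} [Fintype α] [Fintype β] (B : Matrix α β ℝ)
    {s : ℕ} {q : α → ℝ} {h : β → ℝ} (hq : e2 q ≤ 1) (hqs : IsSparse s q) (hh : e2 h ≤ 1) :
    absForm B q h ≤ √s * opNorm B :=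
  calc absForm B q h = ∑ i, |q i| * ∑ j, |B i j| * |h j| := absForm_eq_sum_abs_mul B q h
    _ ≤ ∑ i, |q i| * opNorm B := by gcongr with i; exact sum_abs_mul_abs_le_opNorm B hh i
    _ = (∑ i, |q i|) * opNorm B := (sum_mul ..).symm
    _ ≤ √s * 1 * opNorm B := by
        gcongr
        · exact opNorm_nonneg B
        · exact hqs.sum_abs_le_sqrt_mul_e2.trans (by gcongr)
    _ = √s * opNorm B := by ring

lemma absForm_le_two_rhoMax_sub_rhoMin {n s : ℕ} {B : Matrix (Fin n) (Fin n) ℝ} (hB : B.IsSymm)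
    {q h : Fin n → ℝ} (hq : e2 q = 1) (hqs : IsSparse s q) (hh : e2 h = 1) (hhs : IsSparse s h) :
    absForm B q h ≤ 2 * rhoMax (min (2 * s) n) B - rhoMin s B := by
  set u : Fin n → ℝ := fun i => |q i| + |h i|
  have hexpand : absForm B u u = absForm B q q + absForm B h h + 2 * absForm B q h := by
    simp only [u, absForm_abs_add_abs_left, absForm_abs_add_abs_right, absForm_comm hB q h]
    ring
  have hus : IsSparse (min (2 * s) n) u := by
    simpa [two_mul] using (hqs.abs_add_abs hhs).min_card
  have hu2 : e2 u ≤ 2 := by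
    have htri := e2_add_le (fun i => |q i|) (fun i => |h i|)
    rw [e2_abs, e2_abs, hq, hh] at htri
    exact htri.trans_eq (by norm_num)
  have hmax : 0 ≤ rhoMax (min (2 * s) n) B :=
    (absForm_nonneg B q q).trans <| le_rhoMax B hq <| by
      simpa using (hqs.mono (Nat.le_mul_of_pos_left s two_pos)).min_card
  have hminq := rhoMin_le B hq hqs
  have hminh := rhoMin_le B hh hhs
  have hmaxu : absForm B u u ≤ 4 * rhoMax (min (2 * s) n) B :=
    calc absForm B u u ≤ e2 u ^ 2 * rhoMax (min (2 * s) n) B :=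
          absForm_self_le_e2_sq_mul_rhoMax B hus
      _ ≤ 2 ^ 2 * rhoMax (min (2 * s) n) B := by gcongr; exact e2_nonneg u
      _ = 4 * rhoMax (min (2 * s) n) B := by norm_num
  linarith

theorem rhoTilde_le_general
    (n : ℕ) (hn : 0 < n)
    (B : Matrix (Fin n) (Fin n) ℝ) (hB : B.PosDef)
    (s₀ : ℕ) (hs₀ : 1 ≤ s₀) :
    rhoTilde s₀ B ≤
      min (2 * rhoMax (min (2 * s₀) n) B - rhoMin s₀ B)
        (Real.sqrt s₀ * opNorm B) := by
  have hsingle := (isSparse_single (⟨0, hn⟩ : Fin n) 1).mono hs₀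
  refine csSup_le ⟨_, _, _, e2_single _, hsingle, e2_single _, hsingle, rfl⟩ ?_
  rintro _ ⟨q, h, hq, hqs, hh, hhs, rfl⟩
  exact le_min
    (absForm_le_two_rhoMax_sub_rhoMin (isHermitian_iff_isSymm.mp hB.isHermitian) hq hqs hh hhs)
    (absForm_le_sqrt_mul_opNorm B hq.le hqs hh.le)

/-- Lemma: bound on the two-vector sparse quantity `ρ̃(s₀, |B₀|)`. -/
theorem rhoTilde_le
    (n : ℕ) (hn : 0 < n)
    (B : Matrix (Fin n) (Fin n) ℝ) (hB : B.PosDef)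
    (s₀ : ℕ) (hs₀ : 1 ≤ s₀) (hs₀n : s₀ ≤ n) :
    rhoTilde s₀ B ≤
      min (2 * rhoMax (min (2 * s₀) n) B - rhoMin s₀ B)
        (Real.sqrt s₀ * opNorm B) :=
  rhoTilde_le_general n hn B hB s₀ hs₀
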